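/- arXiv:2512.07423 — 3 statements merged into one kernel-verified Lean document; each statement's English description precedes it below -/
import Mathlib

section
/- Let Y_1,…,Y_n be n independent copies of a random variable Y with E[Y^4] < ∞ and σ_Y^2 = Var(Y) > 0. Then P( n^{-1} Σ_{i=1}^n (Y_i − Ȳ)^2 ≥ 2σ_Y^2 ) ≤ ‖Ỹ‖_4^2 / (σ_Y^2 √n), where Ỹ = Y − E[Y] and ‖Ỹ‖_4 = (E[Ỹ^4])^{1/4}. -/
open MeasureTheory ProbabilityTheory
open scoped ENNReal

lemma sum_sq_sub_mean_le {n : ℕ} (hn : 0 < n) (a : Fin n → ℝ) (c : ℝ) :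
    ∑ i, (a i - (n : ℝ)⁻¹ * ∑ j, a j) ^ 2 ≤ ∑ i, (a i - c) ^ 2 := by
  set m : ℝ := (n : ℝ)⁻¹ * ∑ j, a j with hm
  have hn' : (n : ℝ) ≠ 0 := Nat.cast_ne_zero.mpr hn.ne'
  have hsum0 : ∑ i, (a i - m) = 0 := by
    rw [Finset.sum_sub_distrib, Finset.sum_const, Finset.card_univ, Fintype.card_fin,
      nsmul_eq_mul, hm]
    field_simp
    ring
  have hexp : ∑ i, (a i - c) ^ 2
      = ∑ i, (a i - m) ^ 2 + ((2 * (m - c)) * ∑ i, (a i - m) + (n : ℝ) * (m - c) ^ 2) := by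
    calc ∑ i, (a i - c) ^ 2
        = ∑ i, ((a i - m) ^ 2 + ((2 * (m - c)) * (a i - m) + (m - c) ^ 2)) :=
          Finset.sum_congr rfl fun i _ => by ring
      _ = ∑ i, (a i - m) ^ 2 + ((2 * (m - c)) * ∑ i, (a i - m) + (n : ℝ) * (m - c) ^ 2) := by
          rw [Finset.sum_add_distrib, Finset.sum_add_distrib, ← Finset.mul_sum,
            Finset.sum_const, Finset.card_univ, Fintype.card_fin, nsmul_eq_mul]
  rw [hexp, hsum0]
  have : (0:ℝ) ≤ (n : ℝ) * (m - c) ^ 2 := by positivity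
  linarith

theorem stmt8 {Ω : Type*} [MeasurableSpace Ω] (P : Measure Ω) [IsProbabilityMeasure P]
    (Y : Ω → ℝ) (μY : ℝ) (hμY : μY = ∫ ω, Y ω ∂P)
    (hY4 : MemLp Y 4 P) (hσY : 0 < variance Y P)
    (n : ℕ) (hn : 0 < n) (Ys : Fin n → Ω → ℝ)
    (hindep : iIndepFun Ys P)
    (hident : ∀ i, IdentDistrib (Ys i) Y P P) :
    (P {ω | 2 * variance Y P ≤
        (n : ℝ)⁻¹ * ∑ i, (Ys i ω - (n : ℝ)⁻¹ * ∑ j, Ys j ω) ^ 2}).toReal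
      ≤ Real.sqrt (∫ ω, (Y ω - μY) ^ 4 ∂P) / (variance Y P * Real.sqrt n) := by
  set σ2 := variance Y P with hσ2
  set M : ℝ := ∫ ω, (Y ω - μY) ^ 4 ∂P with hM
  have hn' : (n : ℝ) ≠ 0 := Nat.cast_ne_zero.mpr hn.ne'
  have hnpos : (0:ℝ) < n := Nat.cast_pos.mpr hn
  -- measurable map x ↦ (x - μY)^2
  have mg : Measurable fun x : ℝ => (x - μY) ^ 2 :=
    (measurable_id.sub_const μY).pow_const 2
  -- the squared centered variable for Y is in L²
  have hYm : AEStronglyMeasurable (fun ω => (Y ω - μY) ^ 2) P :=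
    ((hY4.aestronglyMeasurable.aemeasurable.sub_const μY).pow_const 2).aestronglyMeasurable
  have hYsub : MemLp (fun ω => Y ω - μY) 4 P := hY4.sub (memLp_const μY)
  have hint4 : Integrable (fun ω => (Y ω - μY) ^ 4) P := by
    have := hYsub.integrable_norm_rpow (by norm_num) (by norm_num)
    refine this.congr (ae_of_all _ fun ω => ?_)
    show ‖Y ω - μY‖ ^ ((4:ℝ≥0∞).toReal) = (Y ω - μY) ^ 4
    rw [Real.norm_eq_abs, show ((4:ℝ≥0∞).toReal) = ((4:ℕ):ℝ) by norm_num, Real.rpow_natCast,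
      Even.pow_abs (by decide)]
  have h0 : MemLp (fun ω => (Y ω - μY) ^ 2) 2 P := by
    rw [memLp_two_iff_integrable_sq hYm]
    refine hint4.congr (ae_of_all _ fun ω => ?_)
    ring
  have hM0 : 0 ≤ M := integral_nonneg fun ω => by positivity
  -- each centered-squared copy
  set f : Fin n → Ω → ℝ := fun i ω => (Ys i ω - μY) ^ 2 with hf
  have hfid : ∀ i, IdentDistrib (f i) (fun ω => (Y ω - μY) ^ 2) P P :=
    fun i => (hident i).comp mg
  have hfℒ2 : ∀ i, MemLp (f i) 2 P := fun i => (hfid i).symm.memLp_snd h0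
  -- expectation of each f i is σ2
  have hY2 : MemLp Y 2 P := hY4.mono_exponent (by norm_num)
  have hEY2 : ∫ ω, (Y ω - μY) ^ 2 ∂P = σ2 := by
    rw [hσ2, variance_eq_integral hY2.aemeasurable]
    refine integral_congr_ae (ae_of_all _ fun ω => ?_)
    simp [hμY]
  have hEf : ∀ i, ∫ ω, f i ω ∂P = σ2 := fun i => by
    rw [(hfid i).integral_eq, hEY2]
  -- variance of each f i is at most M
  have hVarf : ∀ i, variance (f i) P ≤ M := by
    intro i
    rw [(hfid i).variance_eq]
    refine le_trans (variance_le_expectation_sq hYm) (le_of_eq ?_)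
    refine integral_congr_ae (ae_of_all _ fun ω => ?_)
    simp only [Pi.pow_apply]
    ring
  -- the averaged variable W
  set W : Ω → ℝ := fun ω => (n : ℝ)⁻¹ * ∑ i, f i ω with hW
  have hWℒ2 : MemLp W 2 P := by
    have hs : MemLp (∑ i, f i) 2 P := memLp_finset_sum' _ fun i _ => hfℒ2 i
    have h1 := hs.const_mul ((n : ℝ)⁻¹)
    refine h1.ae_eq (ae_of_all _ fun ω => ?_)
    simp [hW]
  have hEW : ∫ ω, W ω ∂P = σ2 := by
    rw [hW]
    simp only
    rw [integral_const_mul, integral_finset_sum _ fun i _ => (hfℒ2 i).integrable one_le_two]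
    simp [hEf, Finset.sum_const, hσ2]
    field_simp
  -- variance of W
  have hVarW : variance W P ≤ M / n := by
    have h1 : variance W P = ((n:ℝ)⁻¹) ^ 2 * variance (∑ i, f i) P := by
      have := variance_const_mul ((n:ℝ)⁻¹) (∑ i, f i) P
      rw [hW]
      convert this using 2
      · ext ω; simp
    have h2 : variance (∑ i, f i) P = ∑ i, variance (f i) P := by
      refine IndepFun.variance_sum (fun i _ => hfℒ2 i) ?_
      intro i _ j _ hij
      exact (hindep.indepFun hij).comp mg mg
    have h3 : ∑ i, variance (f i) P ≤ (n : ℝ) * M := by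
      calc ∑ i, variance (f i) P ≤ ∑ _i : Fin n, M := Finset.sum_le_sum fun i _ => hVarf i
        _ = (n : ℝ) * M := by simp [Finset.sum_const, mul_comm]
    rw [h1, h2]
    calc ((n:ℝ)⁻¹) ^ 2 * ∑ i, variance (f i) P ≤ ((n:ℝ)⁻¹) ^ 2 * ((n:ℝ) * M) := by
          apply mul_le_mul_of_nonneg_left h3 (by positivity)
      _ = M / n := by field_simp
  -- Chebyshev
  have hcheb := meas_ge_le_variance_div_sq (μ := P) hWℒ2 hσY
  -- event inclusion
  have hsubset : {ω | 2 * σ2 ≤ (n : ℝ)⁻¹ * ∑ i, (Ys i ω - (n : ℝ)⁻¹ * ∑ j, Ys j ω) ^ 2}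
      ⊆ {ω | σ2 ≤ |W ω - ∫ ω', W ω' ∂P|} := by
    intro ω hω
    simp only [Set.mem_setOf_eq] at hω ⊢
    rw [hEW]
    have hle : ∑ i, (Ys i ω - (n : ℝ)⁻¹ * ∑ j, Ys j ω) ^ 2
        ≤ ∑ i, (Ys i ω - μY) ^ 2 := sum_sq_sub_mean_le hn (fun i => Ys i ω) μY
    have hWge : 2 * σ2 ≤ W ω := by
      refine le_trans hω ?_
      rw [hW]
      exact mul_le_mul_of_nonneg_left hle (by positivity)
    rw [abs_of_nonneg (by linarith)]
    linarith
  have hmeas : (P {ω | 2 * σ2 ≤ (n : ℝ)⁻¹ * ∑ i, (Ys i ω - (n : ℝ)⁻¹ * ∑ j, Ys j ω) ^ 2}).toReal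
      ≤ variance W P / σ2 ^ 2 := by
    refine ENNReal.toReal_le_of_le_ofReal (div_nonneg (variance_nonneg _ _) (by positivity)) ?_
    exact le_trans (measure_mono hsubset) hcheb
  have hbound : (P {ω | 2 * σ2 ≤ (n : ℝ)⁻¹ * ∑ i, (Ys i ω - (n : ℝ)⁻¹ * ∑ j, Ys j ω) ^ 2}).toReal
      ≤ M / (n * σ2 ^ 2) := by
    refine le_trans hmeas ?_
    rw [div_le_div_iff₀ (by positivity) (by positivity)]
    calc variance W P * (n * σ2 ^ 2) ≤ (M / n) * (n * σ2 ^ 2) := by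
          apply mul_le_mul_of_nonneg_right hVarW (by positivity)
      _ = M * σ2 ^ 2 := by field_simp
  -- final arithmetic
  set sM := Real.sqrt M with hsM
  set sn := Real.sqrt n with hsn
  have hsM0 : 0 ≤ sM := Real.sqrt_nonneg M
  have hsn0 : 0 < sn := Real.sqrt_pos.mpr hnpos
  have hsMsq : sM * sM = M := Real.mul_self_sqrt hM0
  have hsnsq : sn * sn = (n:ℝ) := Real.mul_self_sqrt hnpos.le
  rcases le_or_gt (σ2 * sn) sM with h | h
  · -- trivial bound: RHS ≥ 1
    have h1 : (P {ω | 2 * σ2 ≤ (n : ℝ)⁻¹ * ∑ i, (Ys i ω - (n : ℝ)⁻¹ * ∑ j, Ys j ω) ^ 2}).toReal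
        ≤ 1 := by
      refine ENNReal.toReal_le_of_le_ofReal zero_le_one ?_
      simpa using prob_le_one
    refine le_trans h1 ?_
    rw [le_div_iff₀ (by positivity), one_mul]
    exact h
  · refine le_trans hbound ?_
    rw [div_le_div_iff₀ (by positivity) (by positivity)]
    calc M * (σ2 * sn) = (sM * sM) * (σ2 * sn) := by rw [hsMsq]
      _ ≤ (sM * (σ2 * sn)) * (σ2 * sn) :=
          mul_le_mul_of_nonneg_right (mul_le_mul_of_nonneg_left h.le hsM0) (by positivity)
      _ = sM * ((n:ℝ) * σ2 ^ 2) := by rw [← hsnsq]; ring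
end

section
/- Let X_1,…,X_n be n independent copies of a random variable X with E[X^4] < ∞ and σ_X^2 = Var(X) > 0. Then P( n^{-1} Σ_{i=1}^n (X_i − X̄)^2 ≤ σ_X^2/2 ) ≤ 2‖X̃‖_4^2 / (√n σ_X^2) + 2/n, where X̃ = X − E[X] and ‖X̃‖_4 = (E[X̃^4])^{1/4}. -/
open MeasureTheory ProbabilityTheory
open scoped ENNReal

private lemma memLp_sq_of_memLp_four {Ω : Type*} [MeasurableSpace Ω] {P : Measure Ω} {f : Ω → ℝ}
    (hf : MemLp f 4 P) : MemLp (fun ω => f ω ^ 2) 2 P := by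
  have h := hf.norm_rpow_div 2
  have h2 : (4 : ℝ≥0∞) / 2 = 2 := by
    rw [eq_comm, ENNReal.eq_div_iff two_ne_zero ENNReal.ofNat_ne_top]; norm_num
  rw [h2] at h
  have heq : (fun x => ‖f x‖ ^ ((2 : ℝ≥0∞)).toReal) = fun ω => f ω ^ 2 := by
    funext x
    rw [show ((2:ℝ≥0∞)).toReal = ((2:ℕ):ℝ) by norm_num, Real.rpow_natCast, Real.norm_eq_abs,
      sq_abs]
  rwa [heq] at h

theorem MeasureTheory.MemLp.variance_eq {Ω : Type*} [MeasurableSpace Ω] {P : Measure Ω}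
    {X : Ω → ℝ} (hX : MemLp X 2 P) : variance X P = ∫ ω, ((X - fun _ => ∫ x, X x ∂P) ^ 2 : Ω → ℝ) ω ∂P :=
  variance_eq_integral hX.aemeasurable

theorem stmt9 {Ω : Type*} [MeasurableSpace Ω] (P : Measure Ω) [IsProbabilityMeasure P]
    (X : Ω → ℝ) (μX : ℝ) (hμX : μX = ∫ ω, X ω ∂P)
    (hX4 : MemLp X 4 P) (hσX : 0 < variance X P)
    (n : ℕ) (hn : 0 < n) (Xs : Fin n → Ω → ℝ)
    (hindep : iIndepFun Xs P)
    (hident : ∀ i, IdentDistrib (Xs i) X P P) :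
    (P {ω | (n : ℝ)⁻¹ * ∑ i, (Xs i ω - (n : ℝ)⁻¹ * ∑ j, Xs j ω) ^ 2
        ≤ variance X P / 2}).toReal
      ≤ 2 * Real.sqrt (∫ ω, (X ω - μX) ^ 4 ∂P) / (Real.sqrt n * variance X P)
        + 2 / n := by
  classical
  set σ2 := variance X P with hσ2def
  set q := ∫ ω, (X ω - μX) ^ 4 ∂P with hqdef
  have hσ2pos : 0 < σ2 := hσX
  have hn0 : (0:ℝ) < n := by exact_mod_cast hn
  have hnne : (n:ℝ) ≠ 0 := ne_of_gt hn0
  -- MemLp facts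
  have hXs4 : ∀ i, MemLp (Xs i) 4 P := fun i => (hident i).symm.memLp_snd hX4
  have hXs2 : ∀ i, MemLp (Xs i) 2 P := fun i => (hXs4 i).mono_exponent (by norm_num)
  have hXsint : ∀ i, Integrable (Xs i) P := fun i => (hXs2 i).integrable one_le_two
  have hmean : ∀ i, ∫ ω, Xs i ω ∂P = μX := fun i => by rw [(hident i).integral_eq, ← hμX]
  have hvar : ∀ i, variance (Xs i) P = σ2 := fun i => (hident i).variance_eq
  set W : Fin n → Ω → ℝ := fun i ω => (Xs i ω - μX) ^ 2 with hWdef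
  have hW2 : ∀ i, MemLp (W i) 2 P :=
    fun i => memLp_sq_of_memLp_four ((hXs4 i).sub (memLp_const μX))
  have hWint : ∀ i, Integrable (W i) P := fun i => (hW2 i).integrable one_le_two
  -- E (W i) = σ2
  have hEW : ∀ i, ∫ ω, W i ω ∂P = σ2 := by
    intro i
    have h2 := (hXs2 i).variance_eq
    rw [hvar i] at h2
    rw [h2]
    refine (integral_congr_ae (Filter.Eventually.of_forall fun ω => ?_)).symm
    simp [hWdef, hmean i]
  set T : Ω → ℝ := fun ω => (n:ℝ)⁻¹ * ∑ i, W i ω with hTdef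
  have hET : ∫ ω, T ω ∂P = σ2 := by
    show ∫ ω, (n:ℝ)⁻¹ * ∑ i, W i ω ∂P = σ2
    rw [integral_const_mul, integral_finset_sum _ (fun i _ => hWint i)]
    simp only [hEW, Finset.sum_const, Finset.card_univ, Fintype.card_fin, nsmul_eq_mul]
    field_simp
  have hsum2 : MemLp (fun ω => ∑ i, W i ω) 2 P := by
    have h := memLp_finset_sum' (μ := P) Finset.univ (fun i (_ : i ∈ Finset.univ) => hW2 i)
    convert h using 1
    funext ω
    simp [Finset.sum_apply]
  have hT2 : MemLp T 2 P := hsum2.const_mul _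
  -- variance of T
  have hWindep : iIndepFun W P := by
    have h := hindep.comp (fun _ => fun x : ℝ => (x - μX) ^ 2)
      (fun _ => (measurable_id.sub_const μX).pow_const 2)
    exact h
  have hvarsum : variance (fun ω => ∑ i, W i ω) P = ∑ i, variance (W i) P := by
    have h := IndepFun.variance_sum (μ := P) (X := W) (s := Finset.univ)
      (fun i _ => hW2 i) (fun i _ j _ hij => hWindep.indepFun hij)
    convert h using 2
    funext ω
    simp [Finset.sum_apply]
  have hvarW : ∀ i, variance (W i) P ≤ q := by
    intro i
    have hid : IdentDistrib (W i) (fun ω => (X ω - μX) ^ 2) P P :=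
      ((hident i).sub_const μX).comp (measurable_id.pow_const 2)
    rw [hid.variance_eq]
    have hmeas : AEStronglyMeasurable (fun ω => (X ω - μX) ^ 2) P :=
      ((hX4.aestronglyMeasurable.aemeasurable.sub_const μX).pow_const 2).aestronglyMeasurable
    calc variance (fun ω => (X ω - μX) ^ 2) P
        ≤ ∫ ω, ((X ω - μX) ^ 2) ^ 2 ∂P := by
          exact variance_le_expectation_sq (μ := P) hmeas
      _ = q := by
          rw [hqdef]
          refine integral_congr_ae (Filter.Eventually.of_forall fun ω => ?_)
          ring
  have hvarT : variance T P ≤ q / n := by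
    have h1 : variance T P = ((n:ℝ)⁻¹) ^ 2 * variance (fun ω => ∑ i, W i ω) P :=
      variance_const_mul _ _ _
    rw [h1, hvarsum]
    have hle : ∑ i, variance (W i) P ≤ (n : ℝ) * q := by
      calc ∑ i, variance (W i) P ≤ ∑ _i : Fin n, q := Finset.sum_le_sum fun i _ => hvarW i
        _ = (n : ℝ) * q := by simp [Finset.sum_const, nsmul_eq_mul]
    calc ((n:ℝ)⁻¹) ^ 2 * ∑ i, variance (W i) P ≤ ((n:ℝ)⁻¹) ^ 2 * ((n:ℝ) * q) :=
          mul_le_mul_of_nonneg_left hle (by positivity)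
      _ = q / n := by field_simp
  -- ∫ (σ2 - T)^2 = variance T
  have hZsqint : Integrable (fun ω => (σ2 - T ω) ^ 2) P :=
    ((memLp_const σ2).sub hT2).integrable_sq
  have hZsq : ∫ ω, (σ2 - T ω) ^ 2 ∂P = variance T P := by
    have h2 := hT2.variance_eq
    rw [hET] at h2
    rw [h2]
    refine integral_congr_ae (Filter.Eventually.of_forall fun ω => ?_)
    simp only [Pi.pow_apply, Pi.sub_apply]
    ring
  -- positivity of q
  have hq0 : 0 ≤ q := by rw [hqdef]; exact integral_nonneg fun ω => by positivity
  have hqpos : 0 < q := by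
    rcases lt_or_eq_of_le hq0 with h | h
    · exact h
    exfalso
    have hint4 : Integrable (fun ω => (X ω - μX) ^ 4) P := by
      have h2 := (memLp_sq_of_memLp_four (hX4.sub (memLp_const μX))).integrable_sq
      refine h2.congr (Filter.Eventually.of_forall fun ω => ?_)
      simp only [Pi.sub_apply]
      ring
    have hzero : (fun ω => (X ω - μX) ^ 4) =ᵐ[P] 0 :=
      (integral_eq_zero_iff_of_nonneg_ae (Filter.Eventually.of_forall fun ω => by positivity)
        hint4).1 (by rw [← hqdef, ← h])
    have hXconst : X =ᵐ[P] fun _ => μX := by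
      filter_upwards [hzero] with ω hω
      have h4 : (X ω - μX) ^ 4 = 0 := hω
      have := pow_eq_zero_iff (n := 4) (by norm_num) |>.1 h4
      linarith [sub_eq_zero.1 this]
    have hX2 : MemLp X 2 P := hX4.mono_exponent (by norm_num)
    have hv := hX2.variance_eq
    rw [← hμX] at hv
    have hvz : variance X P = 0 := by
      rw [hv]
      have hae : ((X - fun _ => μX) ^ (2:ℕ) : Ω → ℝ) =ᵐ[P] (fun _ => (0:ℝ)) := by
        filter_upwards [hXconst] with ω hω
        simp [Pi.pow_apply, Pi.sub_apply, hω]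
      rw [integral_congr_ae hae, integral_zero]
    rw [hσ2def] at hσ2pos
    exact absurd hvz (ne_of_gt hσX)
  -- bound on positive part
  have hZint : Integrable (fun ω => σ2 - T ω) P :=
    (integrable_const σ2).sub (hT2.integrable one_le_two)
  have hposint : Integrable (fun ω => max (σ2 - T ω) 0) P := hZint.pos_part
  set s := Real.sqrt (q / n) with hsdef
  have hspos : 0 < s := Real.sqrt_pos.2 (div_pos hqpos hn0)
  have hs2 : s ^ 2 = q / n := Real.sq_sqrt (div_pos hqpos hn0).le
  have hEpos : ∫ ω, max (σ2 - T ω) 0 ∂P ≤ s := by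
    have hptwise : ∀ ω, max (σ2 - T ω) 0 ≤ ((σ2 - T ω) ^ 2 + s ^ 2) / (2 * s) := by
      intro ω
      rw [le_div_iff₀ (by positivity)]
      rcases le_or_gt (σ2 - T ω) 0 with h | h
      · rw [max_eq_right h]; nlinarith [sq_nonneg (σ2 - T ω), sq_nonneg s]
      · rw [max_eq_left h.le]; nlinarith [sq_nonneg ((σ2 - T ω) - s)]
    calc ∫ ω, max (σ2 - T ω) 0 ∂P
        ≤ ∫ ω, ((σ2 - T ω) ^ 2 + s ^ 2) / (2 * s) ∂P :=
          integral_mono hposint ((hZsqint.add (integrable_const _)).div_const _)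
            fun ω => hptwise ω
      _ = ((∫ ω, (σ2 - T ω) ^ 2 ∂P) + s ^ 2) / (2 * s) := by
          rw [integral_div, integral_add hZsqint (integrable_const _), integral_const]
          simp
      _ ≤ (q / n + q / n) / (2 * s) := by
          gcongr
          · rw [hZsq]; exact hvarT
          · rw [hs2]
      _ = s := by
          rw [div_eq_iff (by positivity)]
          nlinarith [hs2]
  -- mean of bar and second moment of bar - μX
  have hbar2 : MemLp (fun ω => (n:ℝ)⁻¹ * ∑ j, Xs j ω) 2 P := by
    have hs : MemLp (fun ω => ∑ j, Xs j ω) 2 P := by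
      have h := memLp_finset_sum' (μ := P) Finset.univ (fun i (_ : i ∈ Finset.univ) => hXs2 i)
      convert h using 1
      funext ω
      simp [Finset.sum_apply]
    exact hs.const_mul _
  have hEbar : ∫ ω, ((n:ℝ)⁻¹ * ∑ j, Xs j ω) ∂P = μX := by
    rw [integral_const_mul, integral_finset_sum _ (fun i _ => hXsint i)]
    simp only [hmean, Finset.sum_const, Finset.card_univ, Fintype.card_fin, nsmul_eq_mul]
    field_simp
  have hB2int : Integrable (fun ω => ((n:ℝ)⁻¹ * ∑ j, Xs j ω - μX) ^ 2) P :=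
    (hbar2.sub (memLp_const μX)).integrable_sq
  have hEB2 : ∫ ω, ((n:ℝ)⁻¹ * ∑ j, Xs j ω - μX) ^ 2 ∂P = σ2 / n := by
    have hvb : variance (fun ω => (n:ℝ)⁻¹ * ∑ j, Xs j ω) P = σ2 / n := by
      have h1 : variance (fun ω => (n:ℝ)⁻¹ * ∑ j, Xs j ω) P
          = ((n:ℝ)⁻¹) ^ 2 * variance (fun ω => ∑ j, Xs j ω) P := variance_const_mul _ _ _
      have hsum : variance (fun ω => ∑ j, Xs j ω) P = ∑ i, variance (Xs i) P := by
        have h := IndepFun.variance_sum (μ := P) (X := Xs) (s := Finset.univ)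
          (fun i _ => hXs2 i) (fun i _ j _ hij => hindep.indepFun hij)
        convert h using 2
        funext ω
        simp [Finset.sum_apply]
      rw [h1, hsum]
      simp only [hvar, Finset.sum_const, Finset.card_univ, Fintype.card_fin, nsmul_eq_mul]
      field_simp
    rw [← hvb]
    have h2 := hbar2.variance_eq
    rw [hEbar] at h2
    rw [h2]
    refine integral_congr_ae (Filter.Eventually.of_forall fun ω => ?_)
    simp only [Pi.pow_apply, Pi.sub_apply]
  -- Markov
  have hg_int : Integrable
      (fun ω => max (σ2 - T ω) 0 + ((n:ℝ)⁻¹ * ∑ j, Xs j ω - μX) ^ 2) P :=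
    hposint.add hB2int
  have hmarkov := mul_meas_ge_le_integral_of_nonneg
    (Filter.Eventually.of_forall fun ω =>
      add_nonneg (le_max_right _ _) (sq_nonneg _) :
      0 ≤ᵐ[P] fun ω => max (σ2 - T ω) 0 + ((n:ℝ)⁻¹ * ∑ j, Xs j ω - μX) ^ 2)
    hg_int (σ2 / 2)
  -- event inclusion
  have hsub : {ω | (n : ℝ)⁻¹ * ∑ i, (Xs i ω - (n : ℝ)⁻¹ * ∑ j, Xs j ω) ^ 2 ≤ σ2 / 2}
      ⊆ {ω | σ2 / 2 ≤ max (σ2 - T ω) 0 + ((n:ℝ)⁻¹ * ∑ j, Xs j ω - μX) ^ 2} := by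
    intro ω hω
    simp only [Set.mem_setOf_eq] at hω ⊢
    set m := (n:ℝ)⁻¹ * ∑ j, Xs j ω with hm
    have hb : (n:ℝ) * m = ∑ j, Xs j ω := by rw [hm]; field_simp
    have hsum : ∑ i, (Xs i ω - m) ^ 2
        = (∑ i, (Xs i ω - μX) ^ 2) - n * (m - μX) ^ 2 := by
      have hrw : ∀ i ∈ Finset.univ, (Xs i ω - m) ^ 2
          = (Xs i ω - μX) ^ 2 + ((2 * (μX - m)) * Xs i ω
            + (2 * m * (m - μX) - (m - μX) ^ 2)) := by
        intro i _; ring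
      rw [Finset.sum_congr rfl hrw, Finset.sum_add_distrib, Finset.sum_add_distrib,
        ← Finset.mul_sum, Finset.sum_const, Finset.card_univ, Fintype.card_fin,
        nsmul_eq_mul, ← hb]
      ring
    have h1 : (n:ℝ)⁻¹ * ∑ i, (Xs i ω - m) ^ 2 = T ω - (m - μX) ^ 2 := by
      rw [hsum, hTdef]
      simp only [hWdef]
      field_simp
    rw [h1] at hω
    have h2 := le_max_left (σ2 - T ω) 0
    linarith
  -- put everything together
  have hPevent : (P {ω | (n : ℝ)⁻¹ * ∑ i, (Xs i ω - (n : ℝ)⁻¹ * ∑ j, Xs j ω) ^ 2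
      ≤ σ2 / 2}).toReal
      ≤ (P {ω | σ2 / 2 ≤ max (σ2 - T ω) 0 + ((n:ℝ)⁻¹ * ∑ j, Xs j ω - μX) ^ 2}).toReal :=
    ENNReal.toReal_mono (measure_ne_top P _) (measure_mono hsub)
  have hint_eq : ∫ ω, (max (σ2 - T ω) 0 + ((n:ℝ)⁻¹ * ∑ j, Xs j ω - μX) ^ 2) ∂P
      = (∫ ω, max (σ2 - T ω) 0 ∂P) + ∫ ω, ((n:ℝ)⁻¹ * ∑ j, Xs j ω - μX) ^ 2 ∂P :=
    integral_add hposint hB2int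
  have hintle : ∫ ω, (max (σ2 - T ω) 0 + ((n:ℝ)⁻¹ * ∑ j, Xs j ω - μX) ^ 2) ∂P
      ≤ s + σ2 / n := by
    rw [hint_eq, hEB2]
    linarith
  have hPm : (P {ω | σ2 / 2 ≤ max (σ2 - T ω) 0
      + ((n:ℝ)⁻¹ * ∑ j, Xs j ω - μX) ^ 2}).toReal ≤ (s + σ2 / n) / (σ2 / 2) := by
    rw [le_div_iff₀ (by positivity)]
    calc (P _).toReal * (σ2 / 2) = σ2 / 2 * (P _).toReal := by ring
      _ ≤ _ := hmarkov
      _ ≤ s + σ2 / n := hintle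
  have hsqn : s = Real.sqrt q / Real.sqrt n := by
    rw [hsdef, Real.sqrt_div hq0]
  have hrn : (0:ℝ) < Real.sqrt n := Real.sqrt_pos.2 hn0
  calc (P {ω | (n : ℝ)⁻¹ * ∑ i, (Xs i ω - (n : ℝ)⁻¹ * ∑ j, Xs j ω) ^ 2 ≤ σ2 / 2}).toReal
      ≤ (s + σ2 / n) / (σ2 / 2) := hPevent.trans hPm
    _ = 2 * Real.sqrt q / (Real.sqrt n * σ2) + 2 / n := by
        rw [hsqn]
        field_simp
end

section
/- Let (X,Y) be a random couple with E[X^4] < ∞, E[Y^2] < ∞, E[X̃^4 Ỹ^2] < ∞ and a = 4 E[X̃^2 |Ỹ|] > 0. Then for every positive integer n, P( n^{-1} Σ_{i=1}^n X̃_i^2 · |2Y_i − Ȳ − μ_Y| ≥ a ) ≤ 4 ‖X̃^2 Ỹ‖_2 / (a√n) + 2 σ_Y ‖X̃‖_4^2 / (a√n). -/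
open MeasureTheory ProbabilityTheory

lemma sqrtCS {Ω : Type*} [MeasurableSpace Ω] {P : Measure Ω} [IsProbabilityMeasure P]
    {f g : Ω → ℝ} (hf : MemLp f 2 P) (hg : MemLp g 2 P) :
    ∫ ω, |f ω * g ω| ∂P ≤ Real.sqrt (∫ ω, f ω ^ 2 ∂P) * Real.sqrt (∫ ω, g ω ^ 2 ∂P) := by
  have hpq : Real.HolderConjugate 2 2 := Real.HolderConjugate.two_two
  have hf' : MemLp f (ENNReal.ofReal 2) P := by
    simpa [ENNReal.ofReal_ofNat] using hf
  have hg' : MemLp g (ENNReal.ofReal 2) P := by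
    simpa [ENNReal.ofReal_ofNat] using hg
  have h := integral_mul_norm_le_Lp_mul_Lq hpq hf' hg'
  simp only [Real.norm_eq_abs, Real.rpow_two, sq_abs, one_div] at h
  calc ∫ ω, |f ω * g ω| ∂P = ∫ ω, |f ω| * |g ω| ∂P := by simp [abs_mul]
    _ ≤ (∫ a, f a ^ 2 ∂P) ^ (2:ℝ)⁻¹ * (∫ a, g a ^ 2 ∂P) ^ (2:ℝ)⁻¹ := h
    _ = _ := by
        rw [Real.sqrt_eq_rpow, Real.sqrt_eq_rpow]; norm_num

lemma L1leL2 {Ω : Type*} [MeasurableSpace Ω] {P : Measure Ω} [IsProbabilityMeasure P]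
    {f : Ω → ℝ} (hf : MemLp f 2 P) :
    ∫ ω, |f ω| ∂P ≤ Real.sqrt (∫ ω, f ω ^ 2 ∂P) := by
  have h := sqrtCS hf (memLp_const (μ := P) (1:ℝ))
  simpa using h

theorem stmt14 {Ω : Type*} [MeasurableSpace Ω] (P : Measure Ω) [IsProbabilityMeasure P]
    (X Y : Ω → ℝ) (μX μY : ℝ)
    (hμX : μX = ∫ ω, X ω ∂P) (hμY : μY = ∫ ω, Y ω ∂P)
    -- moment assumptions : E[X⁴] < ∞, E[Y²] < ∞, E[X̃⁴Ỹ²] < ∞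
    (hX4 : MemLp X 4 P) (hY2 : MemLp Y 2 P)
    (hX4Y2 : Integrable (fun ω => (X ω - μX) ^ 4 * (Y ω - μY) ^ 2) P)
    -- the threshold a = 4 E[X̃²|Ỹ|] > 0
    (a : ℝ) (ha : a = 4 * ∫ ω, (X ω - μX) ^ 2 * |Y ω - μY| ∂P) (ha0 : 0 < a)
    -- n independent copies of (X,Y)
    (n : ℕ) (hn : 0 < n) (Xs Ys : Fin n → Ω → ℝ)
    (hindep : iIndepFun (fun i ω => (Xs i ω, Ys i ω)) P)
    (hident : ∀ i, IdentDistrib (fun ω => (Xs i ω, Ys i ω)) (fun ω => (X ω, Y ω)) P P) :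
    (P {ω | a ≤ (n : ℝ)⁻¹ * ∑ i, (Xs i ω - μX) ^ 2 *
        |2 * Ys i ω - (n : ℝ)⁻¹ * (∑ j, Ys j ω) - μY|}).toReal
      ≤ 4 * Real.sqrt (∫ ω, ((X ω - μX) ^ 2 * (Y ω - μY)) ^ 2 ∂P) / (a * Real.sqrt n)
        + 2 * Real.sqrt (variance Y P) * Real.sqrt (∫ ω, (X ω - μX) ^ 4 ∂P) /
            (a * Real.sqrt n) := by
  have hn0 : ((n:ℝ)) ≠ 0 := Nat.cast_ne_zero.mpr hn.ne'
  have hnpos : (0:ℝ) < n := Nat.cast_pos.mpr hn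
  -- basic functions
  set Z₀ : Ω → ℝ := fun ω => (X ω - μX) ^ 2 * |Y ω - μY| with hZ₀def
  set W₀ : Ω → ℝ := fun ω => (X ω - μX) ^ 2 with hW₀def
  have mgZ : Measurable (fun p : ℝ × ℝ => (p.1 - μX) ^ 2 * |p.2 - μY|) :=
    ((measurable_fst.sub measurable_const).pow_const 2).mul
      ((measurable_snd.sub measurable_const).abs)
  have mgW : Measurable (fun p : ℝ × ℝ => (p.1 - μX) ^ 2) :=
    (measurable_fst.sub measurable_const).pow_const 2
  set Z : Fin n → Ω → ℝ := fun i ω => (Xs i ω - μX) ^ 2 * |Ys i ω - μY| with hZdef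
  set W : Fin n → Ω → ℝ := fun i ω => (Xs i ω - μX) ^ 2 with hWdef
  -- identical distribution facts
  have hZid : ∀ i, IdentDistrib (Z i) Z₀ P P := fun i => (hident i).comp mgZ
  have hWid : ∀ i, IdentDistrib (W i) W₀ P P := fun i => (hident i).comp mgW
  have hYid : ∀ i, IdentDistrib (Ys i) Y P P := fun i => (hident i).comp measurable_snd
  -- MemLp facts
  have hXt4 : MemLp (fun ω => X ω - μX) 4 P := hX4.sub (memLp_const μX)
  have hYt2 : MemLp (fun ω => Y ω - μY) 2 P := hY2.sub (memLp_const μY)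
  have hXt4int : Integrable (fun ω => (X ω - μX) ^ 4) P := by
    have h := hXt4.integrable_norm_rpow (by norm_num) (by norm_num)
    refine h.congr (Filter.Eventually.of_forall fun ω => ?_)
    show ‖X ω - μX‖ ^ ((4:ENNReal).toReal) = (X ω - μX) ^ 4
    rw [show ((4:ENNReal).toReal) = ((4:ℕ):ℝ) by norm_num, Real.rpow_natCast, Real.norm_eq_abs,
      Even.pow_abs (a := X ω - μX) (by decide : Even 4)]
  have hW₀2 : MemLp W₀ 2 P := by
    refine (memLp_two_iff_integrable_sq ?_).mpr ?_
    · exact ((hX4.aestronglyMeasurable.sub aestronglyMeasurable_const).pow 2)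
    · refine hXt4int.congr (Filter.Eventually.of_forall fun ω => ?_)
      simp [hW₀def]; ring
  have habs : AEStronglyMeasurable (fun ω => |Y ω - μY|) P := by
    simpa [Real.norm_eq_abs] using (hY2.aestronglyMeasurable.sub aestronglyMeasurable_const).norm
  have hZ₀m : AEStronglyMeasurable Z₀ P :=
    ((hX4.aestronglyMeasurable.sub aestronglyMeasurable_const).pow 2).mul habs
  have hZ₀2 : MemLp Z₀ 2 P := by
    refine (memLp_two_iff_integrable_sq hZ₀m).mpr ?_
    refine hX4Y2.congr (Filter.Eventually.of_forall fun ω => ?_)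
    simp only [hZ₀def]
    rw [mul_pow, sq_abs, ← pow_mul]
  have hZ2 : ∀ i, MemLp (Z i) 2 P := fun i => (hZid i).symm.memLp_snd hZ₀2
  have hW2 : ∀ i, MemLp (W i) 2 P := fun i => (hWid i).symm.memLp_snd hW₀2
  have hYs2 : ∀ i, MemLp (Ys i) 2 P := fun i => (hYid i).symm.memLp_snd hY2
  have hZint : ∀ i, Integrable (Z i) P := fun i => (hZ2 i).integrable one_le_two
  have hYsint : ∀ i, Integrable (Ys i) P := fun i => (hYs2 i).integrable one_le_two
  -- the averaged quantities
  set A : Ω → ℝ := fun ω => 2 * (n:ℝ)⁻¹ * (∑ i, Z i) ω with hAdef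
  set V : Ω → ℝ := fun ω => (n:ℝ)⁻¹ * (∑ j, Ys j) ω - μY with hVdef
  set U : Ω → ℝ := fun ω => (n:ℝ)⁻¹ * (∑ i, W i) ω with hUdef
  have hA2 : MemLp A 2 P :=
    (memLp_finset_sum' Finset.univ (fun i _ => hZ2 i)).const_mul _
  have hV2 : MemLp V 2 P :=
    ((memLp_finset_sum' Finset.univ (fun j _ => hYs2 j)).const_mul _).sub (memLp_const _)
  have hU2 : MemLp U 2 P :=
    (memLp_finset_sum' Finset.univ (fun i _ => hW2 i)).const_mul _
  -- expectation of A
  have hEA : ∫ ω, A ω ∂P = a / 2 := by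
    have h1 : ∫ ω, A ω ∂P = 2 * (n:ℝ)⁻¹ * ∑ i : Fin n, ∫ ω, Z i ω ∂P := by
      simp only [hAdef, Finset.sum_apply]
      rw [integral_const_mul, integral_finset_sum _ (fun i _ => hZint i)]
    rw [h1]
    simp only [fun i : Fin n => (hZid i).integral_eq, Finset.sum_const, Finset.card_univ,
      Fintype.card_fin, nsmul_eq_mul]
    have h2 : ∫ ω, Z₀ ω ∂P = a / 4 := by rw [ha]; ring
    rw [h2]
    field_simp
    ring
  -- variance of A
  have hvarA : variance A P ≤ 4 / (n:ℝ) * ∫ ω, ((X ω - μX) ^ 2 * (Y ω - μY)) ^ 2 ∂P := by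
    have hvA : variance A P = (2 * (n:ℝ)⁻¹) ^ 2 * variance (∑ i, Z i) P :=
      variance_const_mul (2 * (n:ℝ)⁻¹) (∑ i, Z i) P
    have hsum : variance (∑ i, Z i) P = ∑ i : Fin n, variance (Z i) P :=
      IndepFun.variance_sum (fun i _ => hZ2 i)
        (fun i _ j _ hij => (hindep.indepFun hij).comp mgZ mgZ)
    have hvarZ₀ : variance Z₀ P ≤ ∫ ω, ((X ω - μX) ^ 2 * (Y ω - μY)) ^ 2 ∂P := by
      refine (variance_le_expectation_sq (μ := P) hZ₀m).trans_eq ?_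
      refine integral_congr_ae (Filter.Eventually.of_forall fun ω => ?_)
      simp only [Pi.pow_apply, hZ₀def]
      rw [mul_pow, sq_abs]
      ring
    have hcalc : variance A P = 4 / (n:ℝ) * variance Z₀ P := by
      rw [hvA, hsum]
      simp only [fun i : Fin n => (hZid i).variance_eq, Finset.sum_const, Finset.card_univ,
        Fintype.card_fin, nsmul_eq_mul]
      field_simp
      ring
    rw [hcalc]
    exact mul_le_mul_of_nonneg_left hvarZ₀ (by positivity)
  have hAc2 : MemLp (fun ω => A ω - a / 2) 2 P := hA2.sub (memLp_const _)
  have hAvar_eq : ∫ ω, (A ω - a / 2) ^ 2 ∂P = variance A P := by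
    rw [variance_eq_integral hA2.aestronglyMeasurable.aemeasurable, hEA]
  have sqrt4 : Real.sqrt 4 = 2 := by
    rw [show (4:ℝ) = 2 ^ 2 by norm_num, Real.sqrt_sq (by norm_num : (0:ℝ) ≤ 2)]
  have hbound1 : ∫ ω, |A ω - a / 2| ∂P
      ≤ 2 * Real.sqrt (∫ ω, ((X ω - μX) ^ 2 * (Y ω - μY)) ^ 2 ∂P) / Real.sqrt n := by
    refine (L1leL2 hAc2).trans ?_
    have h2 : Real.sqrt (∫ ω, (A ω - a / 2) ^ 2 ∂P)
        ≤ Real.sqrt (4 / (n:ℝ) * ∫ ω, ((X ω - μX) ^ 2 * (Y ω - μY)) ^ 2 ∂P) :=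
      Real.sqrt_le_sqrt (by rw [hAvar_eq]; exact hvarA)
    refine h2.trans_eq ?_
    rw [Real.sqrt_mul (by positivity), Real.sqrt_div (by norm_num : (0:ℝ) ≤ 4), sqrt4]
    ring
  -- second part : the V * U term
  have hEYbar : ∫ ω, (n:ℝ)⁻¹ * (∑ j, Ys j) ω ∂P = μY := by
    simp only [Finset.sum_apply]
    rw [integral_const_mul, integral_finset_sum _ (fun j _ => hYsint j)]
    simp only [fun j : Fin n => (hYid j).integral_eq, ← hμY, Finset.sum_const, Finset.card_univ,
      Fintype.card_fin, nsmul_eq_mul]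
    field_simp
  have hYbar2 : MemLp (fun ω => (n:ℝ)⁻¹ * (∑ j, Ys j) ω) 2 P :=
    (memLp_finset_sum' Finset.univ (fun j _ => hYs2 j)).const_mul _
  have hvarV : ∫ ω, V ω ^ 2 ∂P = variance Y P / n := by
    have h1 : ∫ ω, V ω ^ 2 ∂P = variance (fun ω => (n:ℝ)⁻¹ * (∑ j, Ys j) ω) P := by
      rw [variance_eq_integral hYbar2.aestronglyMeasurable.aemeasurable, hEYbar]
    have h2 : variance (fun ω => (n:ℝ)⁻¹ * (∑ j, Ys j) ω) P
        = ((n:ℝ)⁻¹) ^ 2 * variance (∑ j, Ys j) P := variance_const_mul ((n:ℝ)⁻¹) (∑ j, Ys j) P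
    have h3 : variance (∑ j, Ys j) P = ∑ j : Fin n, variance (Ys j) P :=
      IndepFun.variance_sum (fun j _ => hYs2 j)
        (fun i _ j _ hij => (hindep.indepFun hij).comp measurable_snd measurable_snd)
    rw [h1, h2, h3]
    simp only [fun j : Fin n => (hYid j).variance_eq, Finset.sum_const, Finset.card_univ,
      Fintype.card_fin, nsmul_eq_mul]
    field_simp
  have hWsq : ∀ i : Fin n, ∫ ω, W i ω ^ 2 ∂P = ∫ ω, (X ω - μX) ^ 4 ∂P := by
    intro i
    have h := ((hWid i).sq).integral_eq
    rw [h]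
    refine integral_congr_ae (Filter.Eventually.of_forall fun ω => ?_)
    simp only [hW₀def]
    rw [← pow_mul]
  have hBi : ∀ i : Fin n, ∫ ω, |V ω * W i ω| ∂P
      ≤ Real.sqrt (variance Y P / n) * Real.sqrt (∫ ω, (X ω - μX) ^ 4 ∂P) := by
    intro i
    have h := sqrtCS hV2 (hW2 i)
    rw [hvarV, hWsq i] at h
    exact h
  have hVWint : ∀ i : Fin n, Integrable (fun ω => |V ω * W i ω|) P := by
    intro i
    refine Integrable.mono' (((hV2.integrable_sq).add ((hW2 i).integrable_sq)).div_const 2) ?_ ?_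
    · exact ((hV2.aestronglyMeasurable.mul (hW2 i).aestronglyMeasurable).norm).congr
        (Filter.Eventually.of_forall fun ω => (Real.norm_eq_abs _))
    · refine Filter.Eventually.of_forall fun ω => ?_
      simp only [Pi.add_apply]
      rw [Real.norm_eq_abs, abs_abs, abs_mul]
      have h1 : |V ω| ^ 2 = V ω ^ 2 := sq_abs _
      have h2 : |W i ω| ^ 2 = W i ω ^ 2 := sq_abs _
      have h3 := sub_sq (|V ω|) (|W i ω|)
      have h4 := sq_nonneg (|V ω| - |W i ω|)
      clear_value V W
      linarith
  have hUnn : ∀ ω, 0 ≤ U ω := by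
    intro ω
    simp only [hUdef, hWdef, Finset.sum_apply]
    positivity
  have habsVU : ∀ ω, |V ω * U ω| = (n:ℝ)⁻¹ * ∑ i, |V ω * W i ω| := by
    intro ω
    have hWabs : ∀ i : Fin n, |V ω * W i ω| = |V ω| * W i ω := fun i => by
      rw [abs_mul, abs_of_nonneg (show (0:ℝ) ≤ W i ω by simp only [hWdef]; positivity)]
    rw [abs_mul, abs_of_nonneg (hUnn ω)]
    simp only [hUdef, Finset.sum_apply, hWabs]
    rw [← Finset.mul_sum]
    ring
  have hVUint : Integrable (fun ω => |V ω * U ω|) P := by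
    refine (Integrable.const_mul (integrable_finset_sum (f := fun i ω => |V ω * W i ω|)
      Finset.univ (fun i _ => hVWint i)) ((n:ℝ)⁻¹)).congr ?_
    exact Filter.Eventually.of_forall fun ω => (habsVU ω).symm
  have hbound2 : ∫ ω, |V ω * U ω| ∂P
      ≤ Real.sqrt (variance Y P) * Real.sqrt (∫ ω, (X ω - μX) ^ 4 ∂P) / Real.sqrt n := by
    have h1 : ∫ ω, |V ω * U ω| ∂P = (n:ℝ)⁻¹ * ∑ i : Fin n, ∫ ω, |V ω * W i ω| ∂P := by
      rw [show (fun ω => |V ω * U ω|) = fun ω => (n:ℝ)⁻¹ * ∑ i, |V ω * W i ω| from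
        funext habsVU]
      rw [integral_const_mul, integral_finset_sum _ (fun i _ => hVWint i)]
    rw [h1]
    have h2 : ∑ i : Fin n, ∫ ω, |V ω * W i ω| ∂P
        ≤ (n:ℝ) * (Real.sqrt (variance Y P / n) * Real.sqrt (∫ ω, (X ω - μX) ^ 4 ∂P)) := by
      calc ∑ i : Fin n, ∫ ω, |V ω * W i ω| ∂P
          ≤ ∑ _i : Fin n, Real.sqrt (variance Y P / n) * Real.sqrt (∫ ω, (X ω - μX) ^ 4 ∂P) :=
            Finset.sum_le_sum (fun i _ => hBi i)
        _ = (n:ℝ) * (Real.sqrt (variance Y P / n) * Real.sqrt (∫ ω, (X ω - μX) ^ 4 ∂P)) := by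
            rw [Finset.sum_const, Finset.card_univ, Fintype.card_fin, nsmul_eq_mul]
    calc (n:ℝ)⁻¹ * ∑ i : Fin n, ∫ ω, |V ω * W i ω| ∂P
        ≤ (n:ℝ)⁻¹ * ((n:ℝ) * (Real.sqrt (variance Y P / n)
            * Real.sqrt (∫ ω, (X ω - μX) ^ 4 ∂P))) := by
          refine mul_le_mul_of_nonneg_left h2 (by positivity)
      _ = Real.sqrt (variance Y P) * Real.sqrt (∫ ω, (X ω - μX) ^ 4 ∂P) / Real.sqrt n := by
          rw [Real.sqrt_div (variance_nonneg Y P)]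
          field_simp
  -- the dominating function for Markov
  set G : Ω → ℝ := fun ω => |A ω - a / 2| + |V ω * U ω| with hGdef
  have hGint : Integrable G P := ((hAc2.integrable one_le_two).abs).add hVUint
  have hGnn : 0 ≤ᵐ[P] G := Filter.Eventually.of_forall fun ω => by
    simp only [hGdef]; positivity
  -- inclusion of events
  have hsub : {ω | a ≤ (n:ℝ)⁻¹ * ∑ i, (Xs i ω - μX) ^ 2 *
        |2 * Ys i ω - (n:ℝ)⁻¹ * (∑ j, Ys j ω) - μY|} ⊆ {ω | a / 2 ≤ G ω} := by
    intro ω hω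
    simp only [Set.mem_setOf_eq] at hω ⊢
    have hterm : ∀ i : Fin n, (Xs i ω - μX) ^ 2 *
        |2 * Ys i ω - (n:ℝ)⁻¹ * (∑ j, Ys j ω) - μY| ≤ 2 * Z i ω + W i ω * |V ω| := by
      intro i
      have h1 : |2 * Ys i ω - (n:ℝ)⁻¹ * (∑ j, Ys j ω) - μY|
          ≤ 2 * |Ys i ω - μY| + |V ω| := by
        have he : 2 * Ys i ω - (n:ℝ)⁻¹ * (∑ j, Ys j ω) - μY
            = 2 * (Ys i ω - μY) - V ω := by
          simp only [hVdef, Finset.sum_apply]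
          ring
        rw [he]
        refine (abs_sub _ _).trans ?_
        rw [abs_mul, abs_two]
      calc (Xs i ω - μX) ^ 2 * |2 * Ys i ω - (n:ℝ)⁻¹ * (∑ j, Ys j ω) - μY|
          ≤ (Xs i ω - μX) ^ 2 * (2 * |Ys i ω - μY| + |V ω|) :=
            mul_le_mul_of_nonneg_left h1 (by positivity)
        _ = 2 * Z i ω + W i ω * |V ω| := by
            simp only [hZdef, hWdef]
            ring
    have hS : (n:ℝ)⁻¹ * ∑ i, (Xs i ω - μX) ^ 2 *
        |2 * Ys i ω - (n:ℝ)⁻¹ * (∑ j, Ys j ω) - μY| ≤ A ω + |V ω * U ω| := by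
      have h2 := Finset.sum_le_sum (fun i (_ : i ∈ Finset.univ) => hterm i)
      have h3 : (n:ℝ)⁻¹ * ∑ i : Fin n, (2 * Z i ω + W i ω * |V ω|)
          = A ω + |V ω| * U ω := by
        simp only [hAdef, hUdef, Finset.sum_apply]
        rw [Finset.sum_add_distrib, ← Finset.mul_sum, ← Finset.sum_mul]
        ring
      have h4 : |V ω| * U ω = |V ω * U ω| := by
        rw [abs_mul, abs_of_nonneg (hUnn ω)]
      calc (n:ℝ)⁻¹ * ∑ i, (Xs i ω - μX) ^ 2 *
          |2 * Ys i ω - (n:ℝ)⁻¹ * (∑ j, Ys j ω) - μY|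
          ≤ (n:ℝ)⁻¹ * ∑ i : Fin n, (2 * Z i ω + W i ω * |V ω|) :=
            mul_le_mul_of_nonneg_left h2 (by positivity)
        _ = A ω + |V ω * U ω| := by rw [h3, h4]
    have h5 : A ω - a / 2 ≤ |A ω - a / 2| := le_abs_self _
    simp only [hGdef]
    linarith
  -- Markov's inequality
  have hmar := mul_meas_ge_le_integral_of_nonneg hGnn hGint (a / 2)
  have hmono : (P {ω | a ≤ (n:ℝ)⁻¹ * ∑ i, (Xs i ω - μX) ^ 2 *
        |2 * Ys i ω - (n:ℝ)⁻¹ * (∑ j, Ys j ω) - μY|}).toReal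
      ≤ (P {ω | a / 2 ≤ G ω}).toReal :=
    ENNReal.toReal_mono (measure_ne_top _ _) (measure_mono hsub)
  have hGsplit : ∫ ω, G ω ∂P = (∫ ω, |A ω - a / 2| ∂P) + ∫ ω, |V ω * U ω| ∂P := by
    simp only [hGdef]
    exact integral_add ((hAc2.integrable one_le_two).abs) hVUint
  have hsqrtn : (0:ℝ) < Real.sqrt n := Real.sqrt_pos.mpr hnpos
  have hfinal : (P {ω | a / 2 ≤ G ω}).toReal ≤ (∫ ω, G ω ∂P) / (a / 2) := by
    rw [le_div_iff₀ (by positivity)]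
    calc (P {ω | a / 2 ≤ G ω}).toReal * (a / 2)
        = (a / 2) * (P {ω | a / 2 ≤ G ω}).toReal := by ring
      _ ≤ ∫ ω, G ω ∂P := hmar
  refine (hmono.trans hfinal).trans ?_
  rw [hGsplit]
  have hIG : (∫ ω, |A ω - a / 2| ∂P) + ∫ ω, |V ω * U ω| ∂P
      ≤ 2 * Real.sqrt (∫ ω, ((X ω - μX) ^ 2 * (Y ω - μY)) ^ 2 ∂P) / Real.sqrt n
        + Real.sqrt (variance Y P) * Real.sqrt (∫ ω, (X ω - μX) ^ 4 ∂P) / Real.sqrt n :=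
    add_le_add hbound1 hbound2
  calc (∫ ω, |A ω - a / 2| ∂P + ∫ ω, |V ω * U ω| ∂P) / (a / 2)
      ≤ (2 * Real.sqrt (∫ ω, ((X ω - μX) ^ 2 * (Y ω - μY)) ^ 2 ∂P) / Real.sqrt n
          + Real.sqrt (variance Y P) * Real.sqrt (∫ ω, (X ω - μX) ^ 4 ∂P) / Real.sqrt n)
            / (a / 2) := by
        exact div_le_div_of_nonneg_right hIG (by positivity) |>.trans_eq rfl
    _ = 4 * Real.sqrt (∫ ω, ((X ω - μX) ^ 2 * (Y ω - μY)) ^ 2 ∂P) / (a * Real.sqrt n)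
        + 2 * Real.sqrt (variance Y P) * Real.sqrt (∫ ω, (X ω - μX) ^ 4 ∂P) /
            (a * Real.sqrt n) := by
        field_simp
        ring
end
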